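/- Let χ : ℝ → ℝ be a C¹, compactly supported function satisfying χ(ω)=χ(−ω) ≥ 0, ∫χ = 1 and ∫ω²χ = 1. Let γ>1, k>0, ρ₀>0, g>0, θ∈ℝ, S, Z C¹, and let M, D, A, Q : ℝ×ℝ→ℝ be C¹ with M>0, A>0, S−A>0. Set c_a² = kγ(ρ₀M/(S−A))^{γ−1}, b_a² = c_a²/γ, b_w² = (g I₁/A)cosθ + c_a²M/(γ(S−A)) (assumed positive), v=D/M, u=Q/A, ℳ_a = (M/b_a)χ((ξ−v)/b_a), ℳ_w = (A/b_w)χ((ξ−u)/b_w), φ_a = (c_a²/(γ(S−A)))∂ₓ(S−A), φ_w = −g∂ₓZ + (g I₂/A)cosθ + (c_a²M/(γ(S−A)))·(∂ₓA)/A. Assume that for α ∈ {a,w} there exist functions K_α(t,x,ξ) with ∂ₜℳ_α + ξ∂ₓℳ_α + φ_α ∂_ξℳ_α = K_α and ∫_ℝ K_α dξ = 0, ∫_ℝ ξ K_α dξ = 0 for a.e. (t,x). Then (M,D,A,Q) is a solution of the two-layer system: ∂ₜM+∂ₓD=0; ∂ₜD+∂ₓ(D²/M + M c_a²/γ) = (M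 c_a²/(γ(S−A)))∂ₓ(S−A); ∂ₜA+∂ₓQ=0; ∂ₜQ+∂ₓ(Q²/A + g I₁ cosθ + A M c_a²/(γ(S−A))) = −gA∂ₓZ + g I₂ cosθ + (M c_a²/(γ(S−A)))∂ₓA. -/

import Mathlib

open Real MeasureTheory

/-- Partial derivative with respect to the first (time) variable. -/
noncomputable def pt (f : ℝ → ℝ → ℝ) (t x : ℝ) : ℝ := deriv (fun s => f s x) t

/-- Partial derivative with respect to the second (space) variable. -/
noncomputable def px (f : ℝ → ℝ → ℝ) (t x : ℝ) : ℝ := deriv (fun y => f t y) x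

/-- Partial time derivative of a function of `(t, x, ξ)`. -/
noncomputable def kt (f : ℝ → ℝ → ℝ → ℝ) (t x ξ : ℝ) : ℝ :=
  deriv (fun s => f s x ξ) t

/-- Partial space derivative of a function of `(t, x, ξ)`. -/
noncomputable def kx (f : ℝ → ℝ → ℝ → ℝ) (t x ξ : ℝ) : ℝ :=
  deriv (fun y => f t y ξ) x

/-- Partial kinetic-velocity derivative of a function of `(t, x, ξ)`. -/
noncomputable def kv (f : ℝ → ℝ → ℝ → ℝ) (t x ξ : ℝ) : ℝ :=
  deriv (fun ζ => f t x ζ) ξ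

/-!
Write `ω = (ξ - u) / b`. Since `χ` is even with unit mass and unit second moment, the Gibbs
equilibrium `a / b * χ ω` has velocity moments `a`, `a * u` and `a * (u ^ 2 + b ^ 2)`. Taking
moments commutes with differentiating the equilibrium: after the substitution `ξ = u + b * ω` and
one integration by parts against the compactly supported `χ`, the moments of order `≤ 2` of any
derivative of the equilibrium are the derivatives of these moments, while `∫ ∂_ξ ℳ = 0` and
`∫ ξ ∂_ξ ℳ = -a`. So the zeroth and first moments of the transport operator are
`∂ₜ a + ∂ₓ (a u)` and `∂ₜ (a u) + ∂ₓ (a u² + a b²) - a φ`. They vanish almost everywhere by the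
assumption on `K` and are continuous, hence vanish everywhere; with the given `b_a²` and `b_w²`
these are the four equations of the two-layer system.
-/

section PartialDerivatives

variable {f : ℝ → ℝ → ℝ}

theorem hasDerivAt_pt {t x : ℝ} (hf : DifferentiableAt ℝ (Function.uncurry f) (t, x)) :
    HasDerivAt (fun s => f s x) (pt f t x) t :=
  have hs : DifferentiableAt ℝ (fun s => f s x) t :=
    hf.comp (f := fun s => (s, x)) t (differentiableAt_id.prodMk (differentiableAt_const x))
  hs.hasDerivAt

theorem hasDerivAt_px {t x : ℝ} (hf : DifferentiableAt ℝ (Function.uncurry f) (t, x)) :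
    HasDerivAt (fun y => f t y) (px f t x) x :=
  have hy : DifferentiableAt ℝ (fun y => f t y) x :=
    hf.comp (f := fun y => (t, y)) x ((differentiableAt_const t).prodMk differentiableAt_id)
  hy.hasDerivAt

theorem continuous_pt (hf : ContDiff ℝ 1 (Function.uncurry f)) :
    Continuous fun p : ℝ × ℝ => pt f p.1 p.2 := by
  refine ((hf.continuous_fderiv one_ne_zero).clm_apply
    (continuous_const (y := ((1 : ℝ), (0 : ℝ))))).congr fun p => ?_
  exact (((hf.differentiable one_ne_zero p).hasFDerivAt.comp_hasDerivAt p.1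
    ((hasDerivAt_id p.1).prodMk (hasDerivAt_const p.1 p.2))).deriv).symm

theorem continuous_px (hf : ContDiff ℝ 1 (Function.uncurry f)) :
    Continuous fun p : ℝ × ℝ => px f p.1 p.2 := by
  refine ((hf.continuous_fderiv one_ne_zero).clm_apply
    (continuous_const (y := ((0 : ℝ), (1 : ℝ))))).congr fun p => ?_
  exact (((hf.differentiable one_ne_zero p).hasFDerivAt.comp_hasDerivAt p.2
    ((hasDerivAt_const p.2 p.1).prodMk (hasDerivAt_id p.2))).deriv).symm

end PartialDerivatives

theorem integral_mul_add_mul_deriv {χ P R R' : ℝ → ℝ} (hχ : ContDiff ℝ 1 χ)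
    (hχc : HasCompactSupport χ) (hP : Continuous P) (hR : ∀ ω, HasDerivAt R (R' ω) ω)
    (hR' : Continuous R') :
    ∫ ω, (P ω * χ ω + R ω * deriv χ ω) = ∫ ω, (P ω - R' ω) * χ ω := by
  have hRc : Continuous R := continuous_iff_continuousAt.2 fun ω => (hR ω).continuousAt
  have hPχ : Integrable fun ω => P ω * χ ω :=
    (hP.mul hχ.continuous).integrable_of_hasCompactSupport hχc.mul_left
  have hR'χ : Integrable fun ω => R' ω * χ ω :=
    (hR'.mul hχ.continuous).integrable_of_hasCompactSupport hχc.mul_left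
  have hRχ' : Integrable fun ω => R ω * deriv χ ω :=
    (hRc.mul (hχ.continuous_deriv le_rfl)).integrable_of_hasCompactSupport hχc.deriv.mul_left
  have by_parts : ∫ ω, R ω * deriv χ ω = -∫ ω, R' ω * χ ω :=
    integral_mul_deriv_eq_deriv_mul_of_integrable (fun ω _ => hR ω)
      (fun ω _ => (hχ.differentiable one_ne_zero ω).hasDerivAt) hRχ' hR'χ
      ((hRc.mul hχ.continuous).integrable_of_hasCompactSupport hχc.mul_left)
  simp_rw [sub_mul]
  rw [integral_add hPχ hRχ', integral_sub hPχ hR'χ, by_parts, sub_eq_add_neg]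

theorem integral_comp_add_mul (f : ℝ → ℝ) {b : ℝ} (hb : 0 < b) (u : ℝ) :
    ∫ ω, f (u + b * ω) = b⁻¹ * ∫ ξ, f ξ := by
  rw [Measure.integral_comp_mul_left (fun y => f (u + y)) b, integral_add_left_eq_self,
    abs_of_pos (inv_pos.2 hb), smul_eq_mul]

theorem integral_id_mul_eq_zero_of_even {χ : ℝ → ℝ} (hχ : ∀ ω, χ ω = χ (-ω)) :
    ∫ ω, ω * χ ω = 0 := by
  have h := integral_neg_eq_self (fun ω => ω * χ ω) volume
  simp only [neg_mul, ← hχ, integral_neg] at h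
  linarith

/-- The derivative of the Gibbs equilibrium `a / b * χ ((ξ - u) / b)` when its parameters move
with velocity `(a', b', u')`. -/
noncomputable def gibbsTangent (χ : ℝ → ℝ) (a b u a' b' u' ξ : ℝ) : ℝ :=
  ((a' - a * b' / b) * χ ((ξ - u) / b)
    - a / b * (u' + b' * ((ξ - u) / b)) * deriv χ ((ξ - u) / b)) / b

/-- The kinetic variable `w` may move too: with `w` constant this computes `∂ₜ` and `∂ₓ`, with
`a, b, u` constant and `w = id` it computes `∂_ξ`. -/
theorem hasDerivAt_gibbs {χ : ℝ → ℝ} (hχ : Differentiable ℝ χ) {a b u w : ℝ → ℝ}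
    {a' b' u' w' s : ℝ} (ha : HasDerivAt a a' s) (hb : HasDerivAt b b' s)
    (hu : HasDerivAt u u' s) (hw : HasDerivAt w w' s) (hbs : b s ≠ 0) :
    HasDerivAt (fun r => a r / b r * χ ((w r - u r) / b r))
      (gibbsTangent χ (a s) (b s) (u s) a' b' (u' - w') (w s)) s := by
  refine ((ha.div hb hbs).mul ((hχ _).hasDerivAt.comp s ((hw.sub hu).div hb hbs))).congr_deriv ?_
  simp only [Pi.div_apply, Pi.sub_apply, Function.comp_apply, gibbsTangent]
  field_simp
  ring

section GibbsTangent

variable {χ : ℝ → ℝ} {a b u a' b' u' : ℝ}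

theorem continuous_gibbsTangent (hχ : ContDiff ℝ 1 χ) :
    Continuous (gibbsTangent χ a b u a' b' u') := by
  have := hχ.continuous
  have := hχ.continuous_deriv le_rfl
  unfold gibbsTangent
  fun_prop

theorem hasCompactSupport_gibbsTangent (hχ : HasCompactSupport χ) (hb : b ≠ 0) :
    HasCompactSupport (gibbsTangent χ a b u a' b' u') := by
  have hF : HasCompactSupport fun ω =>
      ((a' - a * b' / b) * χ ω - a / b * (u' + b' * ω) * deriv χ ω) / b := by
    refine hχ.mono' fun ω hω => ?_
    by_contra h
    have hχ' : deriv χ ω = 0 :=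
      image_eq_zero_of_notMem_tsupport fun h' => h (tsupport_deriv_subset h')
    simp [image_eq_zero_of_notMem_tsupport h, hχ'] at hω
  convert hF.comp_homeomorph
    ((Homeomorph.subRight u).trans (Homeomorph.mulRight₀ b⁻¹ (inv_ne_zero hb))) using 1
  funext ξ
  simp [gibbsTangent, div_eq_mul_inv]

/-- The moment of a derivative of the Gibbs equilibrium against `p` is the derivative of its
moment `a * ∫ p (u + b * ω) * χ ω`. -/
theorem integral_mul_gibbsTangent (hχ : ContDiff ℝ 1 χ) (hχc : HasCompactSupport χ)
    {p p' : ℝ → ℝ} (hp : ∀ ξ, HasDerivAt p (p' ξ) ξ) (hp' : Continuous p') (hb : 0 < b) :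
    ∫ ξ, p ξ * gibbsTangent χ a b u a' b' u' ξ
      = ∫ ω, (a' * p (u + b * ω) + a * p' (u + b * ω) * (u' + b' * ω)) * χ ω := by
  have hpc : Continuous p := continuous_iff_continuousAt.2 fun ξ => (hp ξ).continuousAt
  have hpω : ∀ ω, HasDerivAt (fun ω => p (u + b * ω)) (p' (u + b * ω) * b) ω := fun ω =>
    ((hp (u + b * ω)).comp ω (((hasDerivAt_id ω).const_mul b).const_add u)).congr_deriv
      (by simp)
  have hR : ∀ ω, HasDerivAt (fun ω => -(a / b) * p (u + b * ω) * (u' + b' * ω))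
      (-(a / b) * (p' (u + b * ω) * b * (u' + b' * ω) + p (u + b * ω) * b')) ω := fun ω => by
    simpa [mul_assoc] using
      ((hpω ω).mul (((hasDerivAt_id ω).const_mul b').const_add u')).const_mul (-(a / b))
  have hsubst : ∫ ξ, p ξ * gibbsTangent χ a b u a' b' u' ξ
      = ∫ ω, (p (u + b * ω) * (a' - a * b' / b) * χ ω
          + -(a / b) * p (u + b * ω) * (u' + b' * ω) * deriv χ ω) := by
    have hω : ∀ ω, (u + b * ω - u) / b = ω := fun ω => by field_simp; ring
    rw [← mul_inv_cancel_left₀ hb.ne' (∫ ξ, _), ← integral_comp_add_mul _ hb u,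
      ← integral_const_mul]
    congr 1
    funext ω
    simp only [gibbsTangent, hω]
    field_simp
    ring
  rw [hsubst, integral_mul_add_mul_deriv hχ hχc (by fun_prop) hR (by fun_prop)]
  congr 1
  funext ω
  field_simp
  ring

end GibbsTangent

structure IsKineticProfile (χ : ℝ → ℝ) : Prop where
  contDiff : ContDiff ℝ 1 χ
  hasCompactSupport : HasCompactSupport χ
  even : ∀ ω, χ ω = χ (-ω)
  integral_eq_one : ∫ ω, χ ω = 1
  integral_sq_mul_eq_one : ∫ ω, ω ^ 2 * χ ω = 1

namespace IsKineticProfile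

variable {χ : ℝ → ℝ} {a b u a' b' u' : ℝ}

theorem integrable_pow_mul (hχ : IsKineticProfile χ) (n : ℕ) :
    Integrable fun ω : ℝ => ω ^ n * χ ω :=
  ((continuous_pow n).mul hχ.contDiff.continuous).integrable_of_hasCompactSupport
    hχ.hasCompactSupport.mul_left

theorem integral_mul_of_eq_quadratic (hχ : IsKineticProfile χ) {q : ℝ → ℝ} (c₀ c₁ c₂ : ℝ)
    (hq : ∀ ω, q ω = c₀ + c₁ * ω + c₂ * ω ^ 2) : ∫ ω, q ω * χ ω = c₀ + c₂ := by
  have i₀ := (hχ.integrable_pow_mul 0).const_mul c₀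
  have i₁ := (hχ.integrable_pow_mul 1).const_mul c₁
  have i₂ := (hχ.integrable_pow_mul 2).const_mul c₂
  calc ∫ ω, q ω * χ ω
      = ∫ ω, c₀ * (ω ^ 0 * χ ω) + c₁ * (ω ^ 1 * χ ω) + c₂ * (ω ^ 2 * χ ω) := by
        congr 1; funext ω; rw [hq]; ring
    _ = c₀ * (∫ ω, χ ω) + c₁ * (∫ ω, ω * χ ω) + c₂ * ∫ ω, ω ^ 2 * χ ω := by
        rw [integral_add (i₀.fun_add i₁) i₂, integral_add i₀ i₁]
        simp only [integral_const_mul, pow_zero, pow_one, one_mul]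
    _ = c₀ + c₂ := by
        simp only [hχ.integral_eq_one, integral_id_mul_eq_zero_of_even hχ.even,
          hχ.integral_sq_mul_eq_one]
        ring

theorem integrable_mul_gibbsTangent (hχ : IsKineticProfile χ) {p : ℝ → ℝ} (hp : Continuous p)
    (hb : b ≠ 0) : Integrable fun ξ => p ξ * gibbsTangent χ a b u a' b' u' ξ :=
  (hp.mul (continuous_gibbsTangent hχ.contDiff)).integrable_of_hasCompactSupport
    (hasCompactSupport_gibbsTangent hχ.hasCompactSupport hb).mul_left

theorem integrable_gibbsTangent (hχ : IsKineticProfile χ) (hb : b ≠ 0) :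
    Integrable (gibbsTangent χ a b u a' b' u') := by
  simpa using hχ.integrable_mul_gibbsTangent (a := a) (u := u) (a' := a') (b' := b') (u' := u')
    continuous_const (p := fun _ => 1) hb

theorem integral_gibbsTangent (hχ : IsKineticProfile χ) (hb : 0 < b) :
    ∫ ξ, gibbsTangent χ a b u a' b' u' ξ = a' := by
  have h := integral_mul_gibbsTangent (a := a) (u := u) (a' := a') (b' := b') (u' := u')
    hχ.contDiff hχ.hasCompactSupport (fun ξ => hasDerivAt_const ξ (1 : ℝ)) continuous_const hb
  simp only [one_mul] at h
  rw [h, hχ.integral_mul_of_eq_quadratic a' 0 0 fun ω => by ring]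
  ring

theorem integral_id_mul_gibbsTangent (hχ : IsKineticProfile χ) (hb : 0 < b) :
    ∫ ξ, ξ * gibbsTangent χ a b u a' b' u' ξ = a' * u + a * u' := by
  rw [integral_mul_gibbsTangent hχ.contDiff hχ.hasCompactSupport (hasDerivAt_id' ·)
      continuous_const hb,
    hχ.integral_mul_of_eq_quadratic (a' * u + a * u') (a' * b + a * b') 0 fun ω => by ring]
  ring

theorem integral_sq_mul_gibbsTangent (hχ : IsKineticProfile χ) (hb : 0 < b) :
    ∫ ξ, ξ ^ 2 * gibbsTangent χ a b u a' b' u' ξ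
      = a' * (u ^ 2 + b ^ 2) + 2 * a * (u * u' + b * b') := by
  rw [integral_mul_gibbsTangent hχ.contDiff hχ.hasCompactSupport (p' := fun ξ => 2 * ξ)
      (fun ξ => by simpa using hasDerivAt_pow 2 ξ) (by fun_prop) hb,
    hχ.integral_mul_of_eq_quadratic (a' * u ^ 2 + 2 * a * u * u')
      (2 * a' * u * b + 2 * a * (u * b' + b * u')) (a' * b ^ 2 + 2 * a * b * b')
      fun ω => by ring]
  ring

variable {aₜ bₜ uₜ aₓ bₓ uₓ : ℝ}

theorem integral_transport_gibbsTangent (hχ : IsKineticProfile χ) (hb : 0 < b) (φ : ℝ) :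
    ∫ ξ, (gibbsTangent χ a b u aₜ bₜ uₜ ξ + ξ * gibbsTangent χ a b u aₓ bₓ uₓ ξ
        + φ * gibbsTangent χ a b u 0 0 (-1) ξ) = aₜ + (aₓ * u + a * uₓ) := by
  rw [integral_add ((hχ.integrable_gibbsTangent hb.ne').fun_add
      (hχ.integrable_mul_gibbsTangent continuous_id' hb.ne'))
      ((hχ.integrable_gibbsTangent hb.ne').const_mul φ),
    integral_add (hχ.integrable_gibbsTangent hb.ne')
      (hχ.integrable_mul_gibbsTangent continuous_id' hb.ne'),
    integral_const_mul, hχ.integral_gibbsTangent hb, hχ.integral_id_mul_gibbsTangent hb,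
    hχ.integral_gibbsTangent hb]
  ring

theorem integral_id_mul_transport_gibbsTangent (hχ : IsKineticProfile χ) (hb : 0 < b) (φ : ℝ) :
    ∫ ξ, ξ * (gibbsTangent χ a b u aₜ bₜ uₜ ξ + ξ * gibbsTangent χ a b u aₓ bₓ uₓ ξ
        + φ * gibbsTangent χ a b u 0 0 (-1) ξ)
      = (aₜ * u + a * uₜ) + (aₓ * (u ^ 2 + b ^ 2) + 2 * a * (u * uₓ + b * bₓ)) - a * φ := by
  have hint : ∀ {p : ℝ → ℝ} {a' b' u' : ℝ}, Continuous p →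
      Integrable fun ξ => p ξ * gibbsTangent χ a b u a' b' u' ξ :=
    fun hp => hχ.integrable_mul_gibbsTangent hp hb.ne'
  set T₁ := gibbsTangent χ a b u aₜ bₜ uₜ
  set T₂ := gibbsTangent χ a b u aₓ bₓ uₓ
  set T₃ := gibbsTangent χ a b u 0 0 (-1)
  have hexpand : ∀ ξ, ξ * (T₁ ξ + ξ * T₂ ξ + φ * T₃ ξ)
      = ξ * T₁ ξ + ξ ^ 2 * T₂ ξ + φ * (ξ * T₃ ξ) := fun ξ => by ring
  simp only [hexpand]
  rw [integral_add ((hint continuous_id').fun_add (hint (continuous_pow 2)))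
      ((hint continuous_id').const_mul φ),
    integral_add (hint continuous_id') (hint (continuous_pow 2)), integral_const_mul,
    hχ.integral_id_mul_gibbsTangent hb, hχ.integral_sq_mul_gibbsTangent hb,
    hχ.integral_id_mul_gibbsTangent hb]
  ring

theorem transport_gibbs_eq (hχ : IsKineticProfile χ) {a b u : ℝ → ℝ → ℝ}
    {ℳ : ℝ → ℝ → ℝ → ℝ} (hℳ : ∀ t x ξ, ℳ t x ξ = a t x / b t x * χ ((ξ - u t x) / b t x))
    {t x : ℝ} (ha : DifferentiableAt ℝ (Function.uncurry a) (t, x))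
    (hb : DifferentiableAt ℝ (Function.uncurry b) (t, x))
    (hu : DifferentiableAt ℝ (Function.uncurry u) (t, x)) (hbpos : 0 < b t x) (φ ξ : ℝ) :
    kt ℳ t x ξ + ξ * kx ℳ t x ξ + φ * kv ℳ t x ξ
      = gibbsTangent χ (a t x) (b t x) (u t x) (pt a t x) (pt b t x) (pt u t x) ξ
        + ξ * gibbsTangent χ (a t x) (b t x) (u t x) (px a t x) (px b t x) (px u t x) ξ
        + φ * gibbsTangent χ (a t x) (b t x) (u t x) 0 0 (-1) ξ := by
  have hχd := hχ.contDiff.differentiable one_ne_zero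
  have hkt := hasDerivAt_gibbs hχd (hasDerivAt_pt ha) (hasDerivAt_pt hb) (hasDerivAt_pt hu)
    (hasDerivAt_const t ξ) hbpos.ne'
  have hkx := hasDerivAt_gibbs hχd (hasDerivAt_px ha) (hasDerivAt_px hb) (hasDerivAt_px hu)
    (hasDerivAt_const x ξ) hbpos.ne'
  have hkv := hasDerivAt_gibbs hχd (hasDerivAt_const ξ (a t x)) (hasDerivAt_const ξ (b t x))
    (hasDerivAt_const ξ (u t x)) (hasDerivAt_id' ξ) hbpos.ne'
  simp only [kt, kx, kv, hℳ, hkt.deriv, hkx.deriv, hkv.deriv, sub_zero, zero_sub]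

theorem integral_transport_gibbs (hχ : IsKineticProfile χ) {a b u : ℝ → ℝ → ℝ}
    {ℳ : ℝ → ℝ → ℝ → ℝ} (hℳ : ∀ t x ξ, ℳ t x ξ = a t x / b t x * χ ((ξ - u t x) / b t x))
    {t x : ℝ} (ha : DifferentiableAt ℝ (Function.uncurry a) (t, x))
    (hb : DifferentiableAt ℝ (Function.uncurry b) (t, x))
    (hu : DifferentiableAt ℝ (Function.uncurry u) (t, x)) (hbpos : 0 < b t x) (φ : ℝ) :
    (∫ ξ, (kt ℳ t x ξ + ξ * kx ℳ t x ξ + φ * kv ℳ t x ξ))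
        = pt a t x + px (fun t x => a t x * u t x) t x
      ∧ (∫ ξ, ξ * (kt ℳ t x ξ + ξ * kx ℳ t x ξ + φ * kv ℳ t x ξ))
        = pt (fun t x => a t x * u t x) t x
          + px (fun t x => a t x * u t x ^ 2 + a t x * b t x ^ 2) t x - a t x * φ := by
  have hpt_au : pt (fun t x => a t x * u t x) t x = pt a t x * u t x + a t x * pt u t x :=
    ((hasDerivAt_pt ha).fun_mul (hasDerivAt_pt hu)).deriv
  have hpx_au : px (fun t x => a t x * u t x) t x = px a t x * u t x + a t x * px u t x :=
    ((hasDerivAt_px ha).fun_mul (hasDerivAt_px hu)).deriv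
  have hpx_flux : px (fun t x => a t x * u t x ^ 2 + a t x * b t x ^ 2) t x
      = px a t x * (u t x ^ 2 + b t x ^ 2)
        + 2 * a t x * (u t x * px u t x + b t x * px b t x) := by
    rw [px, (((hasDerivAt_px ha).fun_mul ((hasDerivAt_px hu).fun_pow 2)).fun_add
      ((hasDerivAt_px ha).fun_mul ((hasDerivAt_px hb).fun_pow 2))).deriv]
    ring
  simp only [hχ.transport_gibbs_eq hℳ ha hb hu hbpos]
  rw [hχ.integral_transport_gibbsTangent hbpos, hχ.integral_id_mul_transport_gibbsTangent hbpos,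
    hpt_au, hpx_au, hpx_flux]
  exact ⟨rfl, rfl⟩

theorem conservation_laws_of_transport (hχ : IsKineticProfile χ) {a b u φ : ℝ → ℝ → ℝ}
    {ℳ K : ℝ → ℝ → ℝ → ℝ} (ha : ContDiff ℝ 1 (Function.uncurry a))
    (hb : ContDiff ℝ 1 (Function.uncurry b)) (hu : ContDiff ℝ 1 (Function.uncurry u))
    (hφ : Continuous (Function.uncurry φ)) (hbpos : ∀ t x, 0 < b t x)
    (hℳ : ∀ t x ξ, ℳ t x ξ = a t x / b t x * χ ((ξ - u t x) / b t x))
    (hK : ∀ t x ξ, kt ℳ t x ξ + ξ * kx ℳ t x ξ + φ t x * kv ℳ t x ξ = K t x ξ)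
    (hKmom : ∀ᵐ p : ℝ × ℝ, (∫ ξ, K p.1 p.2 ξ = 0) ∧ ∫ ξ, ξ * K p.1 p.2 ξ = 0) :
    (∀ t x, pt a t x + px (fun t x => a t x * u t x) t x = 0)
      ∧ ∀ t x, pt (fun t x => a t x * u t x) t x
          + px (fun t x => a t x * u t x ^ 2 + a t x * b t x ^ 2) t x = a t x * φ t x := by
  have hmom := fun t x => hχ.integral_transport_gibbs hℳ (ha.differentiable one_ne_zero (t, x))
    (hb.differentiable one_ne_zero (t, x)) (hu.differentiable one_ne_zero (t, x)) (hbpos t x)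
    (φ t x)
  simp only [hK] at hmom
  have hau : ContDiff ℝ 1 (Function.uncurry fun t x => a t x * u t x) := ha.mul hu
  have hflux : ContDiff ℝ 1 (Function.uncurry fun t x => a t x * u t x ^ 2 + a t x * b t x ^ 2) :=
    (ha.mul (hu.pow 2)).add (ha.mul (hb.pow 2))
  have hmass := ((continuous_pt ha).add (continuous_px hau)).ae_eq_iff_eq volume
    continuous_const |>.1 (hKmom.mono fun p hp => (hmom p.1 p.2).1.symm.trans hp.1)
  have hmomentum := (((continuous_pt hau).add (continuous_px hflux)).sub
    (ha.continuous.mul hφ)).ae_eq_iff_eq volume continuous_const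
    |>.1 (hKmom.mono fun p hp => (hmom p.1 p.2).2.symm.trans hp.2)
  exact ⟨fun t x => congrFun hmass (t, x), fun t x => sub_eq_zero.1 (congrFun hmomentum (t, x))⟩

end IsKineticProfile

namespace IsKineticProfile

variable {χ : ℝ → ℝ} {γ : ℝ} {S : ℝ → ℝ} {M A ca2 : ℝ → ℝ → ℝ}

theorem air_layer_equations (hχ : IsKineticProfile χ) (hγ : 0 < γ)
    {D v ba φa : ℝ → ℝ → ℝ} {Ma Ka : ℝ → ℝ → ℝ → ℝ}
    (hMreg : ContDiff ℝ 1 (Function.uncurry M)) (hDreg : ContDiff ℝ 1 (Function.uncurry D))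
    (hca2reg : ContDiff ℝ 1 (Function.uncurry ca2))
    (hSAreg : ContDiff ℝ 1 (Function.uncurry fun t x => S x - A t x))
    (hMpos : ∀ t x, 0 < M t x) (hSA : ∀ t x, 0 < S x - A t x) (hca2pos : ∀ t x, 0 < ca2 t x)
    (hv : ∀ t x, v t x = D t x / M t x) (hba : ∀ t x, ba t x = √(ca2 t x / γ))
    (hMa : ∀ t x ξ, Ma t x ξ = M t x / ba t x * χ ((ξ - v t x) / ba t x))
    (hφa : ∀ t x, φa t x
        = ca2 t x / (γ * (S x - A t x)) * px (fun t x => S x - A t x) t x)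
    (hKa : ∀ t x ξ, kt Ma t x ξ + ξ * kx Ma t x ξ + φa t x * kv Ma t x ξ = Ka t x ξ)
    (hKmom : ∀ᵐ p : ℝ × ℝ, (∫ ξ, Ka p.1 p.2 ξ = 0) ∧ ∫ ξ, ξ * Ka p.1 p.2 ξ = 0) :
    (∀ t x, pt M t x + px D t x = 0)
      ∧ ∀ t x, pt D t x + px (fun t x => D t x ^ 2 / M t x + M t x * ca2 t x / γ) t x
          = M t x * ca2 t x / (γ * (S x - A t x)) * px (fun t x => S x - A t x) t x := by
  have hvreg : ContDiff ℝ 1 (Function.uncurry v) := by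
    rw [funext₂ hv]; exact hDreg.div hMreg fun p => (hMpos p.1 p.2).ne'
  have hbareg : ContDiff ℝ 1 (Function.uncurry ba) := by
    rw [funext₂ hba]
    exact (hca2reg.div_const γ).sqrt fun p => (div_pos (hca2pos p.1 p.2) hγ).ne'
  have hφacont : Continuous (Function.uncurry φa) := by
    rw [funext₂ hφa]
    exact (hca2reg.continuous.div (continuous_const.mul hSAreg.continuous)
      fun p => (mul_pos hγ (hSA p.1 p.2)).ne').mul (continuous_px hSAreg)
  obtain ⟨hmass, hmomentum⟩ := hχ.conservation_laws_of_transport hMreg hbareg hvreg hφacont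
    (fun t x => by rw [hba]; exact sqrt_pos.2 (div_pos (hca2pos t x) hγ)) hMa hKa hKmom
  have hMv : (fun t x => M t x * v t x) = D := by
    funext t x; rw [hv]; field_simp [(hMpos t x).ne']
  have hflux : (fun t x => M t x * v t x ^ 2 + M t x * ba t x ^ 2)
      = fun t x => D t x ^ 2 / M t x + M t x * ca2 t x / γ := by
    funext t x
    rw [hv, hba, sq_sqrt (div_pos (hca2pos t x) hγ).le]
    field_simp [(hMpos t x).ne']
  refine ⟨fun t x => hMv ▸ hmass t x, fun t x => ?_⟩
  have h := hmomentum t x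
  rw [hMv, hflux, hφa] at h
  rw [h]
  ring

theorem water_layer_equations (hχ : IsKineticProfile χ) (hγ : 0 < γ) {g θ : ℝ} {Z : ℝ → ℝ}
    {I₁ I₂ Q u bw φw : ℝ → ℝ → ℝ} {Mw Kw : ℝ → ℝ → ℝ → ℝ} (hZreg : ContDiff ℝ 1 Z)
    (hI₁reg : ContDiff ℝ 1 (Function.uncurry I₁)) (hI₂reg : ContDiff ℝ 1 (Function.uncurry I₂))
    (hMreg : ContDiff ℝ 1 (Function.uncurry M)) (hAreg : ContDiff ℝ 1 (Function.uncurry A))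
    (hQreg : ContDiff ℝ 1 (Function.uncurry Q)) (hca2reg : ContDiff ℝ 1 (Function.uncurry ca2))
    (hSAreg : ContDiff ℝ 1 (Function.uncurry fun t x => S x - A t x))
    (hApos : ∀ t x, 0 < A t x) (hSA : ∀ t x, 0 < S x - A t x)
    (hu : ∀ t x, u t x = Q t x / A t x)
    (hbw2pos : ∀ t x, 0 < g * I₁ t x / A t x * Real.cos θ
        + ca2 t x * M t x / (γ * (S x - A t x)))
    (hbw : ∀ t x, bw t x = √(g * I₁ t x / A t x * Real.cos θ
        + ca2 t x * M t x / (γ * (S x - A t x))))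
    (hMw : ∀ t x ξ, Mw t x ξ = A t x / bw t x * χ ((ξ - u t x) / bw t x))
    (hφw : ∀ t x, φw t x
        = -g * deriv Z x + g * I₂ t x / A t x * Real.cos θ
          + ca2 t x * M t x / (γ * (S x - A t x)) * (px A t x / A t x))
    (hKw : ∀ t x ξ, kt Mw t x ξ + ξ * kx Mw t x ξ + φw t x * kv Mw t x ξ = Kw t x ξ)
    (hKmom : ∀ᵐ p : ℝ × ℝ, (∫ ξ, Kw p.1 p.2 ξ = 0) ∧ ∫ ξ, ξ * Kw p.1 p.2 ξ = 0) :
    (∀ t x, pt A t x + px Q t x = 0)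
      ∧ ∀ t x,
        pt Q t x + px (fun t x => Q t x ^ 2 / A t x + g * I₁ t x * Real.cos θ
            + A t x * (M t x * ca2 t x / (γ * (S x - A t x)))) t x
          = -g * A t x * deriv Z x + g * I₂ t x * Real.cos θ
            + M t x * ca2 t x / (γ * (S x - A t x)) * px A t x := by
  have hA₀ : ∀ p : ℝ × ℝ, A p.1 p.2 ≠ 0 := fun p => (hApos p.1 p.2).ne'
  have hγSA₀ : ∀ p : ℝ × ℝ, γ * (S p.2 - A p.1 p.2) ≠ 0 := fun p => (mul_pos hγ (hSA p.1 p.2)).ne'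
  have hureg : ContDiff ℝ 1 (Function.uncurry u) := by
    rw [funext₂ hu]; exact hQreg.div hAreg hA₀
  have hbwreg : ContDiff ℝ 1 (Function.uncurry bw) := by
    rw [funext₂ hbw]
    exact ((((contDiff_const.mul hI₁reg).div hAreg hA₀).mul contDiff_const).add
      ((hca2reg.mul hMreg).div (contDiff_const.mul hSAreg) hγSA₀)).sqrt
        fun p => (hbw2pos p.1 p.2).ne'
  have hφwcont : Continuous (Function.uncurry φw) := by
    rw [funext₂ hφw]
    exact ((continuous_const.mul ((hZreg.continuous_deriv le_rfl).comp continuous_snd)).add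
      (((continuous_const.mul hI₂reg.continuous).div hAreg.continuous hA₀).mul
        continuous_const)).add (((hca2reg.continuous.mul hMreg.continuous).div
          (continuous_const.mul hSAreg.continuous) hγSA₀).mul
            ((continuous_px hAreg).div hAreg.continuous hA₀))
  obtain ⟨hmass, hmomentum⟩ := hχ.conservation_laws_of_transport hAreg hbwreg hureg hφwcont
    (fun t x => by rw [hbw]; exact sqrt_pos.2 (hbw2pos t x)) hMw hKw hKmom
  have hAu : (fun t x => A t x * u t x) = Q := by
    funext t x; rw [hu]; field_simp [(hApos t x).ne']
  have hflux : (fun t x => A t x * u t x ^ 2 + A t x * bw t x ^ 2)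
      = fun t x => Q t x ^ 2 / A t x + g * I₁ t x * Real.cos θ
        + A t x * (M t x * ca2 t x / (γ * (S x - A t x))) := by
    funext t x
    rw [hu, hbw, sq_sqrt (hbw2pos t x).le]
    field_simp [(hApos t x).ne']
    ring
  refine ⟨fun t x => hAu ▸ hmass t x, fun t x => ?_⟩
  have h := hmomentum t x
  rw [hAu, hflux, hφw] at h
  rw [h]
  field_simp [(hApos t x).ne']

end IsKineticProfile

theorem kinetic_formulation_implies_macroscopic_system_general
    (χ : ℝ → ℝ) (hχreg : ContDiff ℝ 1 χ) (hχsupp : HasCompactSupport χ)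
    (hχeven : ∀ ω, χ ω = χ (-ω))
    (hχnorm : ∫ ω, χ ω = 1) (hχsecond : ∫ ω, ω ^ 2 * χ ω = 1)
    (γ k ρ₀ g θ : ℝ) (hγ : 1 < γ) (hk : 0 < k) (hρ₀ : 0 < ρ₀)
    (S Z : ℝ → ℝ) (hSreg : ContDiff ℝ 1 S) (hZreg : ContDiff ℝ 1 Z)
    (I₁ I₂ : ℝ → ℝ → ℝ)
    (hI₁reg : ContDiff ℝ 1 (Function.uncurry I₁))
    (hI₂reg : ContDiff ℝ 1 (Function.uncurry I₂))
    (M D A Q : ℝ → ℝ → ℝ)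
    (hMreg : ContDiff ℝ 1 (Function.uncurry M))
    (hDreg : ContDiff ℝ 1 (Function.uncurry D))
    (hAreg : ContDiff ℝ 1 (Function.uncurry A))
    (hQreg : ContDiff ℝ 1 (Function.uncurry Q))
    (hMpos : ∀ t x, 0 < M t x) (hApos : ∀ t x, 0 < A t x)
    (hSA : ∀ t x, 0 < S x - A t x)
    (ca2 : ℝ → ℝ → ℝ)
    (hca2 : ∀ t x, ca2 t x = k * γ * (ρ₀ * M t x / (S x - A t x)) ^ (γ - 1))
    (v u : ℝ → ℝ → ℝ)
    (hv : ∀ t x, v t x = D t x / M t x)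
    (hu : ∀ t x, u t x = Q t x / A t x)
    (ba bw : ℝ → ℝ → ℝ)
    (hba : ∀ t x, ba t x = Real.sqrt (ca2 t x / γ))
    (hbw2pos : ∀ t x, 0 < g * I₁ t x / A t x * Real.cos θ
        + ca2 t x * M t x / (γ * (S x - A t x)))
    (hbw : ∀ t x, bw t x = Real.sqrt (g * I₁ t x / A t x * Real.cos θ
        + ca2 t x * M t x / (γ * (S x - A t x))))
    (Ma Mw : ℝ → ℝ → ℝ → ℝ)
    (hMa : ∀ t x ξ, Ma t x ξ = M t x / ba t x * χ ((ξ - v t x) / ba t x))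
    (hMw : ∀ t x ξ, Mw t x ξ = A t x / bw t x * χ ((ξ - u t x) / bw t x))
    (φa φw : ℝ → ℝ → ℝ)
    (hφa : ∀ t x, φa t x
        = ca2 t x / (γ * (S x - A t x)) * px (fun t x => S x - A t x) t x)
    (hφw : ∀ t x, φw t x
        = -g * deriv Z x + g * I₂ t x / A t x * Real.cos θ
          + ca2 t x * M t x / (γ * (S x - A t x)) * (px A t x / A t x))
    (Ka Kw : ℝ → ℝ → ℝ → ℝ)
    (hKa : ∀ t x ξ, kt Ma t x ξ + ξ * kx Ma t x ξ + φa t x * kv Ma t x ξ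
        = Ka t x ξ)
    (hKw : ∀ t x ξ, kt Mw t x ξ + ξ * kx Mw t x ξ + φw t x * kv Mw t x ξ
        = Kw t x ξ)
    (hKmom : ∀ᵐ p : ℝ × ℝ, (∫ ξ, Ka p.1 p.2 ξ = 0) ∧ (∫ ξ, ξ * Ka p.1 p.2 ξ = 0)
        ∧ (∫ ξ, Kw p.1 p.2 ξ = 0) ∧ (∫ ξ, ξ * Kw p.1 p.2 ξ = 0)) :
    (∀ t x, pt M t x + px D t x = 0)
    ∧ (∀ t x,
        pt D t x + px (fun t x => D t x ^ 2 / M t x + M t x * ca2 t x / γ) t x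
          = M t x * ca2 t x / (γ * (S x - A t x))
              * px (fun t x => S x - A t x) t x)
    ∧ (∀ t x, pt A t x + px Q t x = 0)
    ∧ (∀ t x,
        pt Q t x + px (fun t x => Q t x ^ 2 / A t x + g * I₁ t x * Real.cos θ
            + A t x * (M t x * ca2 t x / (γ * (S x - A t x)))) t x
          = -g * A t x * deriv Z x + g * I₂ t x * Real.cos θ
            + M t x * ca2 t x / (γ * (S x - A t x)) * px A t x) := by
  have hγ₀ : 0 < γ := by linarith
  have hχ : IsKineticProfile χ := ⟨hχreg, hχsupp, hχeven, hχnorm, hχsecond⟩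
  have hca2pos : ∀ t x, 0 < ca2 t x := fun t x => by
    rw [hca2]
    exact mul_pos (mul_pos hk hγ₀)
      (rpow_pos_of_pos (div_pos (mul_pos hρ₀ (hMpos t x)) (hSA t x)) _)
  have hSAreg : ContDiff ℝ 1 (Function.uncurry fun t x => S x - A t x) :=
    (hSreg.comp contDiff_snd).sub hAreg
  have hca2reg : ContDiff ℝ 1 (Function.uncurry ca2) := by
    rw [funext₂ hca2]
    exact contDiff_const.mul (((contDiff_const.mul hMreg).div hSAreg fun p => (hSA p.1 p.2).ne')
      |>.rpow_const_of_ne fun p => (div_pos (mul_pos hρ₀ (hMpos p.1 p.2)) (hSA p.1 p.2)).ne')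
  obtain ⟨hairMass, hairMomentum⟩ := hχ.air_layer_equations hγ₀ hMreg hDreg hca2reg hSAreg
    hMpos hSA hca2pos hv hba hMa hφa hKa (hKmom.mono fun _ h => ⟨h.1, h.2.1⟩)
  obtain ⟨hwaterMass, hwaterMomentum⟩ := hχ.water_layer_equations hγ₀ hZreg hI₁reg hI₂reg
    hMreg hAreg hQreg hca2reg hSAreg hApos hSA hu hbw2pos hbw hMw hφw hKw
    (hKmom.mono fun _ h => ⟨h.2.2.1, h.2.2.2⟩)
  exact ⟨hairMass, hairMomentum, hwaterMass, hwaterMomentum⟩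

/-- if the Gibbs equilibria `ℳ_a`, `ℳ_w` satisfy the kinetic
transport equations with collision terms `K_a`, `K_w` whose zeroth and first
moments in `ξ` vanish for a.e. `(t, x)`, then `(M, D, A, Q)` solves the
two-layer system. -/
theorem kinetic_formulation_implies_macroscopic_system
    (χ : ℝ → ℝ) (hχreg : ContDiff ℝ 1 χ) (hχsupp : HasCompactSupport χ)
    (hχeven : ∀ ω, χ ω = χ (-ω)) (hχpos : ∀ ω, 0 ≤ χ ω)
    (hχnorm : ∫ ω, χ ω = 1) (hχsecond : ∫ ω, ω ^ 2 * χ ω = 1)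
    (γ k ρ₀ g θ : ℝ) (hγ : 1 < γ) (hk : 0 < k) (hρ₀ : 0 < ρ₀) (hg : 0 < g)
    (S Z : ℝ → ℝ) (hSreg : ContDiff ℝ 1 S) (hZreg : ContDiff ℝ 1 Z)
    (I₁ I₂ : ℝ → ℝ → ℝ)
    (hI₁reg : ContDiff ℝ 1 (Function.uncurry I₁))
    (hI₂reg : ContDiff ℝ 1 (Function.uncurry I₂))
    (M D A Q : ℝ → ℝ → ℝ)
    (hMreg : ContDiff ℝ 1 (Function.uncurry M))
    (hDreg : ContDiff ℝ 1 (Function.uncurry D))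
    (hAreg : ContDiff ℝ 1 (Function.uncurry A))
    (hQreg : ContDiff ℝ 1 (Function.uncurry Q))
    (hMpos : ∀ t x, 0 < M t x) (hApos : ∀ t x, 0 < A t x)
    (hSA : ∀ t x, 0 < S x - A t x)
    (ca2 : ℝ → ℝ → ℝ)
    (hca2 : ∀ t x, ca2 t x = k * γ * (ρ₀ * M t x / (S x - A t x)) ^ (γ - 1))
    (v u : ℝ → ℝ → ℝ)
    (hv : ∀ t x, v t x = D t x / M t x)
    (hu : ∀ t x, u t x = Q t x / A t x)
    (ba bw : ℝ → ℝ → ℝ)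
    (hba : ∀ t x, ba t x = Real.sqrt (ca2 t x / γ))
    (hbw2pos : ∀ t x, 0 < g * I₁ t x / A t x * Real.cos θ
        + ca2 t x * M t x / (γ * (S x - A t x)))
    (hbw : ∀ t x, bw t x = Real.sqrt (g * I₁ t x / A t x * Real.cos θ
        + ca2 t x * M t x / (γ * (S x - A t x))))
    (Ma Mw : ℝ → ℝ → ℝ → ℝ)
    (hMa : ∀ t x ξ, Ma t x ξ = M t x / ba t x * χ ((ξ - v t x) / ba t x))
    (hMw : ∀ t x ξ, Mw t x ξ = A t x / bw t x * χ ((ξ - u t x) / bw t x))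
    (φa φw : ℝ → ℝ → ℝ)
    (hφa : ∀ t x, φa t x
        = ca2 t x / (γ * (S x - A t x)) * px (fun t x => S x - A t x) t x)
    (hφw : ∀ t x, φw t x
        = -g * deriv Z x + g * I₂ t x / A t x * Real.cos θ
          + ca2 t x * M t x / (γ * (S x - A t x)) * (px A t x / A t x))
    (Ka Kw : ℝ → ℝ → ℝ → ℝ)
    (hKa : ∀ t x ξ, kt Ma t x ξ + ξ * kx Ma t x ξ + φa t x * kv Ma t x ξ
        = Ka t x ξ)
    (hKw : ∀ t x ξ, kt Mw t x ξ + ξ * kx Mw t x ξ + φw t x * kv Mw t x ξ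
        = Kw t x ξ)
    (hKmom : ∀ᵐ p : ℝ × ℝ, (∫ ξ, Ka p.1 p.2 ξ = 0) ∧ (∫ ξ, ξ * Ka p.1 p.2 ξ = 0)
        ∧ (∫ ξ, Kw p.1 p.2 ξ = 0) ∧ (∫ ξ, ξ * Kw p.1 p.2 ξ = 0)) :
    (∀ t x, pt M t x + px D t x = 0)
    ∧ (∀ t x,
        pt D t x + px (fun t x => D t x ^ 2 / M t x + M t x * ca2 t x / γ) t x
          = M t x * ca2 t x / (γ * (S x - A t x))
              * px (fun t x => S x - A t x) t x)
    ∧ (∀ t x, pt A t x + px Q t x = 0)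
    ∧ (∀ t x,
        pt Q t x + px (fun t x => Q t x ^ 2 / A t x + g * I₁ t x * Real.cos θ
            + A t x * (M t x * ca2 t x / (γ * (S x - A t x)))) t x
          = -g * A t x * deriv Z x + g * I₂ t x * Real.cos θ
            + M t x * ca2 t x / (γ * (S x - A t x)) * px A t x) :=
  kinetic_formulation_implies_macroscopic_system_general χ hχreg hχsupp hχeven hχnorm hχsecond γ k
    ρ₀ g θ hγ hk hρ₀ S Z hSreg hZreg I₁ I₂ hI₁reg hI₂reg M D A Q hMreg hDreg hAreg hQreg hMpos hApos
    hSA ca2 hca2 v u hv hu ba bw hba hbw2pos hbw Ma Mw hMa hMw φa φw hφa hφw Ka Kw hKa hKw hKmom
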